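/- arXiv:0902.4177 — 4 statements merged into one kernel-verified Lean document; each statement's English description precedes it below -/
import Mathlib

section
/- Let F = 𝔽_2 (ZMod 2) and let C = { (u·(1 + z²), u·z) : u ∈ F[[z]] } ⊆ F[[z]]² be the rate-1/2 convolutional code generated by G(z) = [1 + z², z]. Then d_free(C) = 3. -/
open PowerSeries

/-- Hamming weight of `v ∈ F[[z]]²`: the extended-natural-number cardinality of the set
of pairs `(l, t)` with `coeff_t (v_l) ≠ 0`. -/
noncomputable def wH {F : Type*} [Field F] (v : Fin 2 → PowerSeries F) : ℕ∞ :=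
  {p : Fin 2 × ℕ | PowerSeries.coeff (R := F) p.2 (v p.1) ≠ 0}.encard

/-!
Let `n` be the order of `u ≠ 0`. Then `u (1 + z²)` has the nonzero coefficient `u_n` at `n` and
`u z` has it at `n + 1`. A third nonzero coefficient comes from `u_{n+2}`: either
`u_{n+2} + u_n ≠ 0`, which is the coefficient of `u (1 + z²)` at `n + 2`, or `u_{n+2} ≠ 0`, which
is the coefficient of `u z` at `n + 3`. The bound is attained by `u = 1`.
-/

variable {F : Type*} [Field F]

lemma three_le_wH {v : Fin 2 → F⟦X⟧} {a b c : Fin 2 × ℕ}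
    (hab : a ≠ b) (hac : a ≠ c) (hbc : b ≠ c) (ha : coeff a.2 (v a.1) ≠ 0)
    (hb : coeff b.2 (v b.1) ≠ 0) (hc : coeff c.2 (v c.1) ≠ 0) : 3 ≤ wH v := by
  rw [← Set.encard_eq_three.mpr ⟨a, b, c, hab, hac, hbc, rfl⟩]
  exact Set.encard_le_encard (by rintro _ (rfl | rfl | rfl) <;> assumption)

lemma coeff_mul_one_add_X_sq_of_lt_two {u : F⟦X⟧} {n : ℕ} (hn : n < 2) :
    coeff n (u * (1 + X ^ 2)) = coeff n u := by
  rw [mul_add, mul_one, map_add, coeff_mul_X_pow', if_neg (by omega), add_zero]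

lemma coeff_add_two_mul_one_add_X_sq (u : F⟦X⟧) (n : ℕ) :
    coeff (n + 2) (u * (1 + X ^ 2)) = coeff (n + 2) u + coeff n u := by
  rw [mul_add, mul_one, map_add, coeff_mul_X_pow]

lemma coeff_order_mul_one_add_X_sq (u : F⟦X⟧) :
    coeff u.order.toNat (u * (1 + X ^ 2)) = coeff u.order.toNat u := by
  obtain hn | ⟨n, hn⟩ : u.order.toNat < 2 ∨ ∃ n, u.order.toNat = n + 2 :=
    (lt_or_ge _ 2).imp_right fun h => ⟨_, (Nat.sub_add_cancel h).symm⟩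
  · exact coeff_mul_one_add_X_sq_of_lt_two hn
  · rw [hn, coeff_add_two_mul_one_add_X_sq, coeff_of_lt_order_toNat n (by omega), add_zero]

lemma three_le_wH_generator {u : F⟦X⟧} (hu : u ≠ 0) :
    3 ≤ wH ![u * (1 + X ^ 2), u * X] := by
  set n := u.order.toNat
  have hn : coeff n u ≠ 0 := coeff_order hu
  have h0 : coeff n (u * (1 + X ^ 2)) ≠ 0 := by rwa [coeff_order_mul_one_add_X_sq]
  have h1 : coeff (n + 1) (u * X) ≠ 0 := by rwa [coeff_succ_mul_X]
  by_cases h2 : coeff (n + 2) u + coeff n u = 0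
  · have h3 : coeff (n + 3) (u * X) ≠ 0 := by
      rw [coeff_succ_mul_X]
      exact fun h => hn (by simpa [h] using h2)
    exact three_le_wH (a := (0, n)) (b := (1, n + 1)) (c := (1, n + 3))
      (by simp) (by simp) (by simp) h0 h1 h3
  · have h3 : coeff (n + 2) (u * (1 + X ^ 2)) ≠ 0 := by
      rwa [coeff_add_two_mul_one_add_X_sq]
    exact three_le_wH (a := (0, n)) (b := (1, n + 1)) (c := (0, n + 2))
      (by simp) (by simp) (by simp) h0 h1 h3

lemma wH_generator : wH ![(1 + X ^ 2 : F⟦X⟧), X] = 3 := by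
  have hsupp : {p : Fin 2 × ℕ | coeff p.2 (![(1 + X ^ 2 : F⟦X⟧), X] p.1) ≠ 0} =
      {(0, 0), (0, 2), (1, 1)} := by
    ext ⟨l, t⟩
    fin_cases l <;> rcases t with _ | _ | _ | t <;>
      simp [coeff_one, coeff_X_pow, coeff_X]
  rw [wH, hsupp, Set.encard_eq_three]
  exact ⟨_, _, _, by simp, by simp, by simp, rfl⟩

/-- the rate-1/2 convolutional code over `ZMod 2` generated by
`G(z) = [1 + X ^ 2, X]` has free distance `3`. -/
theorem dfree_eq_10 :
    sInf {w : ℕ∞ | ∃ v : Fin 2 → PowerSeries (ZMod 2),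
      (∃ u : PowerSeries (ZMod 2), v = ![u * (1 + X ^ 2), u * (X)]) ∧
      v ≠ 0 ∧ w = wH v} = 3 := by
  apply le_antisymm
  · refine sInf_le ⟨_, ⟨1, rfl⟩, fun h => X_ne_zero (R := ZMod 2) ?_, ?_⟩
    · simpa using congrFun h 1
    · simp only [one_mul, wH_generator]
  · refine le_sInf ?_
    rintro w ⟨v, ⟨u, rfl⟩, hv, rfl⟩
    exact three_le_wH_generator fun hu => hv (by simp [hu])
end

section
/- Let F = 𝔽_3 (ZMod 3) and let C = { (u·(1 + z²), u·(1 + z + z²)) : u ∈ F[[z]] } ⊆ F[[z]]² be the rate-1/2 convolutional code generated by G(z) = [1 + z², 1 + z + z²]. Then d_free(C) = 5. -/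
/-! The two generators differ by `X`, so the two components of the codeword of `u` differ by
`X * u`: every nonzero coefficient of `u` shows up, shifted by one, in one of the components.
Hence a codeword of finite weight comes from a polynomial `u = p`. Then both components have
nonzero coefficients at the trailing degree `n` of `p` and at `deg p + 2`, and one of them is
nonzero at `n + 1`, so the weight is at least `2 + 2 + 1 = 5`; `u = 1` attains it. -/

open PowerSeries

namespace PowerSeries

variable {R : Type*}

def coeffSupport [Semiring R] (f : R⟦X⟧) : Set ℕ := {n | coeff n f ≠ 0}

@[simp]
theorem mem_coeffSupport [Semiring R] {f : R⟦X⟧} {n : ℕ} :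
    n ∈ coeffSupport f ↔ coeff n f ≠ 0 := Iff.rfl

theorem coeffSupport_sub_subset [Ring R] (f g : R⟦X⟧) :
    coeffSupport (f - g) ⊆ coeffSupport f ∪ coeffSupport g := by
  intro n hn
  by_contra h
  simp_all

theorem coeffSupport_X_mul [Semiring R] (f : R⟦X⟧) :
    coeffSupport (X * f) = (· + 1) '' coeffSupport f := by
  ext n
  cases n <;> simp [coeff_succ_X_mul]

theorem exists_coe_eq_of_coeffSupport_finite [Semiring R] {f : R⟦X⟧}
    (hf : (coeffSupport f).Finite) : ∃ p : Polynomial R, (p : R⟦X⟧) = f := by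
  obtain ⟨N, hN⟩ := hf.bddAbove
  refine ⟨trunc (N + 1) f, ext fun n => ?_⟩
  rw [Polynomial.coeff_coe, coeff_trunc]
  split_ifs with h
  · rfl
  · by_contra hn
    exact h (Nat.lt_succ_of_le (hN (Ne.symm hn)))

theorem coeffSupport_coe [Semiring R] (p : Polynomial R) :
    coeffSupport (p : R⟦X⟧) = p.support := by
  ext n
  simp

end PowerSeries

theorem wH_pair {F : Type*} [Field F] (a b : F⟦X⟧) :
    wH ![a, b] = (coeffSupport a).encard + (coeffSupport b).encard := by
  have hS : {p : Fin 2 × ℕ | coeff p.2 (![a, b] p.1) ≠ 0}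
      = Prod.mk 0 '' coeffSupport a ∪ Prod.mk 1 '' coeffSupport b := by
    ext ⟨l, t⟩
    fin_cases l <;> simp
  have hdisj : Disjoint (Prod.mk (0 : Fin 2) '' coeffSupport a) (Prod.mk 1 '' coeffSupport b) := by
    rw [Set.disjoint_iff_forall_ne]
    rintro _ ⟨x, _, rfl⟩ _ ⟨y, _, rfl⟩ h
    simpa using congrArg Prod.fst h
  rw [wH, hS, Set.encard_union_eq hdisj, (Prod.mk_right_injective 0).encard_image,
    (Prod.mk_right_injective 1).encard_image]

@[simp]
theorem wH_zero {F : Type*} [Field F] : wH (0 : Fin 2 → F⟦X⟧) = 0 := by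
  simp [wH]

namespace Polynomial

variable {R : Type*} [Semiring R] [NoZeroDivisors R] {p q : Polynomial R}

theorem natTrailingDegree_mem_support_mul (hp : p ≠ 0) (hq : q.coeff 0 ≠ 0) :
    p.natTrailingDegree ∈ (p * q).support := by
  have hq' : q ≠ 0 := by rintro rfl; exact hq (coeff_zero 0)
  have h := natTrailingDegree_mem_support_of_nonzero (mul_ne_zero hp hq')
  rwa [natTrailingDegree_mul hp hq', natTrailingDegree_eq_zero.mpr (.inr hq), add_zero] at h

theorem natDegree_add_mem_support_mul (hp : p ≠ 0) (hq : q ≠ 0) :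
    p.natDegree + q.natDegree ∈ (p * q).support := by
  rw [← natDegree_mul hp hq]
  exact natDegree_mem_support_of_nonzero (mul_ne_zero hp hq)

end Polynomial

theorem five_le_encard_add_encard {α : Type*} {A B : Set α} {x y z : α} (hxy : x ≠ y)
    (hxz : x ≠ z) (hyz : y ≠ z) (hx : x ∈ A ∩ B) (hy : y ∈ A ∪ B) (hz : z ∈ A ∩ B) :
    5 ≤ A.encard + B.encard := by
  have h3 : 3 ≤ (A ∪ B).encard := by
    rw [← Set.encard_eq_three.mpr ⟨x, y, z, hxy, hxz, hyz, rfl⟩]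
    refine Set.encard_le_encard ?_
    rintro w (rfl | rfl | rfl)
    exacts [Set.mem_union_left _ hx.1, hy, Set.mem_union_left _ hz.1]
  have h2 : 2 ≤ (A ∩ B).encard := by
    rw [← Set.encard_pair hxz]
    refine Set.encard_le_encard ?_
    rintro w (rfl | rfl)
    exacts [hx, hz]
  calc (5 : ℕ∞) = 3 + 2 := rfl
    _ ≤ (A ∪ B).encard + (A ∩ B).encard := add_le_add h3 h2
    _ = A.encard + B.encard := Set.encard_union_add_encard_inter A B

theorem five_le_wH_mul {F : Type*} [Field F] {g₁ g₂ : Polynomial F}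
    (hg₂ : g₂ = g₁ + Polynomial.X) (hg₁0 : g₁.coeff 0 ≠ 0) (hg₁ : 2 ≤ g₁.natDegree) {u : F⟦X⟧}
    (hu : u ≠ 0) : 5 ≤ wH ![u * (g₁ : F⟦X⟧), u * (g₂ : F⟦X⟧)] := by
  rw [wH_pair]
  have hshift : (· + 1) '' coeffSupport u ⊆
      coeffSupport (u * (g₁ : F⟦X⟧)) ∪ coeffSupport (u * (g₂ : F⟦X⟧)) := by
    have hX : X * u = u * (g₂ : F⟦X⟧) - u * (g₁ : F⟦X⟧) := by rw [hg₂]; push_cast; ring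
    rw [← coeffSupport_X_mul, hX, Set.union_comm]
    exact coeffSupport_sub_subset _ _
  by_cases hfin : (coeffSupport u).Finite
  · obtain ⟨p, rfl⟩ := exists_coe_eq_of_coeffSupport_finite hfin
    have hp : p ≠ 0 := by rintro rfl; exact hu Polynomial.coe_zero
    have hg₂0 : g₂.coeff 0 ≠ 0 := by simpa [hg₂] using hg₁0
    have hg₂deg : g₂.natDegree = g₁.natDegree := hg₂ ▸
      Polynomial.natDegree_add_eq_left_of_natDegree_lt (by rw [Polynomial.natDegree_X]; omega)
    have hg₁ne : g₁ ≠ 0 := by rintro rfl; simp at hg₁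
    have hg₂ne : g₂ ≠ 0 := by rintro rfl; simp at hg₂0
    simp only [← Polynomial.coe_mul, coeffSupport_coe] at hshift ⊢
    have hle := p.natTrailingDegree_le_natDegree
    apply five_le_encard_add_encard (x := p.natTrailingDegree) (y := p.natTrailingDegree + 1)
      (z := p.natDegree + g₁.natDegree) (by omega) (by omega) (by omega)
    · exact ⟨Polynomial.natTrailingDegree_mem_support_mul hp hg₁0,
        Polynomial.natTrailingDegree_mem_support_mul hp hg₂0⟩
    · exact hshift ⟨_, Polynomial.natTrailingDegree_mem_support_of_nonzero hp, rfl⟩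
    · refine ⟨Polynomial.natDegree_add_mem_support_mul hp hg₁ne, ?_⟩
      rw [← hg₂deg]
      exact Polynomial.natDegree_add_mem_support_mul hp hg₂ne
  · have hinf := (Set.Infinite.image (add_left_injective 1).injOn hfin).mono hshift
    calc 5 ≤ ⊤ := le_top
      _ = _ := hinf.encard_eq.symm
      _ ≤ _ := Set.encard_union_le _ _

theorem wH_one_add_X_sq_one_add_X_add_X_sq {F : Type*} [Field F] :
    wH ![(1 + X ^ 2 : F⟦X⟧), 1 + X + X ^ 2] = 5 := by
  have h₁ : coeffSupport (1 + X ^ 2 : F⟦X⟧) = {0, 2} := by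
    ext t
    rcases t with _ | _ | _ | t <;> simp [coeff_one, coeff_X_pow]
  have h₂ : coeffSupport (1 + X + X ^ 2 : F⟦X⟧) = {0, 1, 2} := by
    ext t
    rcases t with _ | _ | _ | t <;> simp [coeff_one, coeff_X_pow, coeff_X]
  rw [wH_pair, h₁, h₂, Set.encard_pair (by decide), Set.encard_insert_of_notMem (by decide),
    Set.encard_pair (by decide)]
  rfl

/-- the rate-1/2 convolutional code over `ZMod 3` generated by
`G(z) = [1 + X ^ 2, 1 + X + X ^ 2]` has free distance `5`. -/
theorem dfree_eq_12 :
    sInf {w : ℕ∞ | ∃ v : Fin 2 → PowerSeries (ZMod 3),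
      (∃ u : PowerSeries (ZMod 3), v = ![u * (1 + X ^ 2), u * (1 + X + X ^ 2)]) ∧
      v ≠ 0 ∧ w = wH v} = 5 := by
  have hw : wH ![(1 : (ZMod 3)⟦X⟧) * (1 + X ^ 2), 1 * (1 + X + X ^ 2)] = 5 := by
    simpa only [one_mul] using wH_one_add_X_sq_one_add_X_add_X_sq
  refine le_antisymm (sInf_le ⟨_, ⟨1, rfl⟩, fun h => ?_, hw.symm⟩) (le_sInf ?_)
  · rw [h, wH_zero] at hw
    exact absurd hw (by decide)
  · rintro w ⟨v, ⟨u, rfl⟩, hv, rfl⟩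
    have hu : u ≠ 0 := by rintro rfl; simp at hv
    have hdeg : (1 + Polynomial.X ^ 2 : Polynomial (ZMod 3)).natDegree = 2 := by compute_degree!
    have h := five_le_wH_mul (g₂ := 1 + Polynomial.X + Polynomial.X ^ 2) (by ring) (by simp)
      hdeg.ge hu
    push_cast at h
    exact h
end

section
/- Let F = 𝔽_3 (ZMod 3) and let C = { (u·(1 + z + z²), u·(2 + z + 2z²)) : u ∈ F[[z]] } ⊆ F[[z]]² be the rate-1/2 convolutional code generated by G(z) = [1 + z + z², 2 + z + 2z²]. Then d_free(C) = 6. -/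
open PowerSeries

/-!
Over `𝔽₃` we have `g₁ + g₂ = 2z`, so the input `u` of a finite-weight codeword is a
polynomial. Read the encoder as a trellis whose state at time `t` is the memory `(u_{t-1}, u_{t-2})`, and let
`V(p, q)` be the least weight of a path from state `(p, q)` back to the zero state. Along any
input, `V(state t) ≤ (weight emitted at t) + V(state (t+1))`, and `V(0,0) = 0`. Before the first
nonzero input the trellis sits in the zero state; the first nonzero input emits weight `2` and
moves to a state of potential `4`, so every nonzero finite-weight codeword has weight at least
`6`. The codeword of `u = 1` has weight exactly `6`.
-/

open Finset

theorem le_sum_Ico_add_of_le_add_succ (c V : ℕ → ℕ) (h : ∀ t, V t ≤ c t + V (t + 1))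
    {s e : ℕ} (hse : s ≤ e) : V s ≤ ∑ t ∈ Ico s e, c t + V e := by
  induction e, hse using Nat.le_induction with
  | base => simp
  | succ e hse ih =>
    rw [sum_Ico_succ_top hse]
    have := h e
    omega

theorem sum_card_coeff_ne_zero_le_wH {F : Type*} [Field F] [DecidableEq F]
    (v : Fin 2 → PowerSeries F) (T : Finset ℕ) :
    ((∑ t ∈ T, #{l | coeff t (v l) ≠ 0} : ℕ) : ℕ∞) ≤ wH v := by
  let S : Finset (Fin 2 × ℕ) := {p ∈ univ ×ˢ T | coeff p.2 (v p.1) ≠ 0}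
  have hcard : #S = ∑ t ∈ T, #{l | coeff t (v l) ≠ 0} := by
    rw [card_filter, sum_product_right]
    simp only [card_filter]
  rw [← hcard, ← Set.encard_coe_eq_coe_finsetCard]
  exact Set.encard_le_encard fun p hp => (mem_filter.mp hp).2

theorem exists_coeff_eq_zero_of_wH_ne_top {F : Type*} [Field F] {v : Fin 2 → PowerSeries F}
    (hv : wH v ≠ ⊤) :
    ∃ N, ∀ t, N ≤ t → ∀ l, coeff t (v l) = 0 := by
  obtain ⟨N, hN⟩ := ((Set.encard_ne_top_iff.mp hv).image Prod.snd).bddAbove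
  refine ⟨N + 1, fun t ht l => ?_⟩
  by_contra hne
  have := hN ⟨(l, t), hne, rfl⟩
  omega

def branchOutput (x p q : ZMod 3) : Fin 2 → ZMod 3 := ![x + p + q, 2 * x + p + 2 * q]

def branchWeight (x p q : ZMod 3) : ℕ := #{l | branchOutput x p q l ≠ 0}

def returnWeight (p q : ZMod 3) : ℕ :=
  if p = 0 then (if q = 0 then 0 else 2) else (if q = 0 then 4 else 3)

theorem returnWeight_le_branchWeight_add (x p q : ZMod 3) :
    returnWeight p q ≤ branchWeight x p q + returnWeight x p := by
  revert x p q; decide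

theorem branchWeight_add_returnWeight_of_ne_zero {x : ZMod 3} (hx : x ≠ 0) :
    branchWeight x 0 0 + returnWeight x 0 = 6 := by
  revert x; decide

theorem eq_two_mul_branchOutput_add (x p q : ZMod 3) :
    p = 2 * (branchOutput x p q 0 + branchOutput x p q 1) := by
  revert x p q; decide

noncomputable def codeword (u : PowerSeries (ZMod 3)) : Fin 2 → PowerSeries (ZMod 3) :=
  ![u * (1 + X + X ^ 2), u * (2 + X + 2 * X ^ 2)]

theorem coeff_codeword (u : PowerSeries (ZMod 3)) (t : ℕ) (l : Fin 2) :
    coeff t (codeword u l) =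
      branchOutput (coeff t u) (coeff t (u * X)) (coeff t (u * X ^ 2)) l := by
  fin_cases l
  · simp [codeword, branchOutput, mul_add]
  · have h : u * (2 + X + 2 * X ^ 2) = C 2 * u + u * X + C 2 * (u * X ^ 2) := by
      rw [map_ofNat]; ring
    simp [codeword, branchOutput, h, coeff_C_mul]

theorem coeff_succ_mul_X_sq {R : Type*} [Semiring R] (u : PowerSeries R) (t : ℕ) :
    coeff (t + 1) (u * X ^ 2) = coeff t (u * X) := by
  rw [pow_two, ← mul_assoc, coeff_succ_mul_X]

theorem coeff_order_toNat_mul_X_pow_eq_zero {R : Type*} [Semiring R] (u : PowerSeries R)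
    {k : ℕ} (hk : 1 ≤ k) : coeff u.order.toNat (u * X ^ k) = 0 := by
  rw [coeff_mul_X_pow']
  split_ifs
  · exact coeff_of_lt_order_toNat _ (by omega)
  · rfl

theorem card_coeff_codeword_ne_zero (u : PowerSeries (ZMod 3)) (t : ℕ) :
    #{l | coeff t (codeword u l) ≠ 0} =
      branchWeight (coeff t u) (coeff t (u * X)) (coeff t (u * X ^ 2)) := by
  simp only [coeff_codeword, branchWeight]

theorem coeff_mul_X_eq_zero_of_codeword {u : PowerSeries (ZMod 3)} {t : ℕ}
    (h : ∀ l, coeff t (codeword u l) = 0) : coeff t (u * X) = 0 := by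
  rw [eq_two_mul_branchOutput_add (coeff t u) (coeff t (u * X)) (coeff t (u * X ^ 2)),
    ← coeff_codeword, ← coeff_codeword, h, h, add_zero, mul_zero]

theorem six_le_wH_codeword {u : PowerSeries (ZMod 3)} (hu : u ≠ 0) : 6 ≤ wH (codeword u) := by
  by_cases htop : wH (codeword u) = ⊤
  · simp [htop]
  obtain ⟨N, hN⟩ := exists_coeff_eq_zero_of_wH_ne_top htop
  set n := u.order.toNat
  let c t := branchWeight (coeff t u) (coeff t (u * X)) (coeff t (u * X ^ 2))
  let V t := returnWeight (coeff t (u * X)) (coeff t (u * X ^ 2))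
  have hstep : ∀ t, V t ≤ c t + V (t + 1) := fun t => by
    simpa only [V, c, coeff_succ_mul_X, coeff_succ_mul_X_sq] using
      returnWeight_le_branchWeight_add (coeff t u) _ _
  have hmemory₁ : coeff n (u * X) = 0 := by
    simpa using coeff_order_toNat_mul_X_pow_eq_zero u le_rfl
  have hmemory₂ : coeff n (u * X ^ 2) = 0 := coeff_order_toNat_mul_X_pow_eq_zero u one_le_two
  have hleave : c n + V (n + 1) = 6 := by
    simpa only [c, V, coeff_succ_mul_X, coeff_succ_mul_X_sq, hmemory₁, hmemory₂] using
      branchWeight_add_returnWeight_of_ne_zero (coeff_order hu)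
  have hnN : n + 1 < N := by
    by_contra! h
    refine coeff_order hu ?_
    rw [← coeff_succ_mul_X]
    exact coeff_mul_X_eq_zero_of_codeword (hN _ h)
  have hreturn : V (N + 1) = 0 := by
    simp only [V, coeff_succ_mul_X_sq, coeff_mul_X_eq_zero_of_codeword (hN _ le_rfl),
      coeff_mul_X_eq_zero_of_codeword (hN (N + 1) (by omega))]
    rfl
  have htail := le_sum_Ico_add_of_le_add_succ c V hstep (show n + 1 ≤ N + 1 by omega)
  calc (6 : ℕ∞) ≤ ((∑ t ∈ Ico n (N + 1), c t : ℕ) : ℕ∞) := by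
        rw [sum_eq_sum_Ico_succ_bot (by omega)]
        exact_mod_cast (by omega)
    _ ≤ wH (codeword u) := by
        simpa only [card_coeff_codeword_ne_zero] using
          sum_card_coeff_ne_zero_le_wH (codeword u) (Ico n (N + 1))

theorem codeword_one_ne_zero : codeword 1 ≠ 0 := fun h => by
  simpa [coeff_codeword, branchOutput] using congrArg (coeff 0) (congrFun h 0)

theorem wH_codeword_one_le : wH (codeword 1) ≤ 6 := by
  let S : Finset (Fin 2 × ℕ) := univ ×ˢ range 3
  have hsupp : {p : Fin 2 × ℕ | coeff p.2 (codeword 1 p.1) ≠ 0} ⊆ ↑S := by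
    rintro ⟨l, t⟩ h
    by_contra ht
    simp only [S, coe_product, coe_univ, coe_range, Set.mem_prod, Set.mem_univ, Set.mem_Iio,
      true_and, not_lt] at ht
    refine h ?_
    simp [coeff_codeword, branchOutput, coeff_one, coeff_X, coeff_X_pow,
      show t ≠ 0 by omega, show t ≠ 1 by omega, show t ≠ 2 by omega, ← Matrix.zero_empty]
  calc wH (codeword 1) ≤ (↑S : Set (Fin 2 × ℕ)).encard := Set.encard_le_encard hsupp
    _ = 6 := by rw [Set.encard_coe_eq_coe_finsetCard]; rfl

/-- the rate-1/2 convolutional code over `ZMod 3` generated by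
`G(z) = [1 + X + X ^ 2, 2 + X + 2 * X ^ 2]` has free distance `6`. -/
theorem dfree_eq_14 :
    sInf {w : ℕ∞ | ∃ v : Fin 2 → PowerSeries (ZMod 3),
      (∃ u : PowerSeries (ZMod 3), v = ![u * (1 + X + X ^ 2), u * (2 + X + 2 * X ^ 2)]) ∧
      v ≠ 0 ∧ w = wH v} = 6 := by
  refine le_antisymm ?_ (le_sInf ?_)
  · exact sInf_le_of_le ⟨codeword 1, ⟨1, rfl⟩, codeword_one_ne_zero, rfl⟩ wH_codeword_one_le
  · rintro _ ⟨_, ⟨u, rfl⟩, hv, rfl⟩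
    refine six_le_wH_codeword fun hu => hv ?_
    simp [hu]
end

section
/- Let F = 𝔽_3 (ZMod 3) and let C = { (u·(1 + z²), u·(1 + z + z²)) : u ∈ F[[z]] } be the rate-1/2 convolutional code generated by G(z) = [1 + z², 1 + z + z²], which has d_free(C) = 5, row degree ν_1 = 2 and degree δ = 2, with controller-canonical encoder state σ_t(u) = (coeff_{t−1}(u), coeff_{t−2}(u)). Then T_{dfree}(C) = 6; that is: (a) for every u ∈ F[[z]] and every j > 0 such that the total Hamming weight over segments 0,…,j−1 of (u·(1+z²), u·(1+z+z²)) is less than 5 and σ_t(u) ≠ 0 for all 1 ≤ t ≤ j, one has j ≤ 5; and (b) there exists u ∈ F[[z]] for which these conditions hold with j = 5. -/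
open PowerSeries

/-- Total Hamming weight of segments `0, …, j-1` of `v ∈ F[[z]]²`. -/
noncomputable def truncWeight {F : Type*} [Field F] (v : Fin 2 → PowerSeries F) (j : ℕ) : ℕ∞ :=
  {p : Fin 2 × ℕ | p.2 < j ∧ PowerSeries.coeff (R := F) p.2 (v p.1) ≠ 0}.encard

/-- The controller-canonical encoder state `σ_t(u) = (coeff_{t-1}(u), coeff_{t-2}(u))`
(row degree `ν_1 = 2`, coefficients of negative index taken to be `0`) is nonzero. -/
def stateNonzero (u : PowerSeries (ZMod 3)) (t : ℕ) : Prop :=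
  (1 ≤ t ∧ PowerSeries.coeff (R := ZMod 3) (t - 1) u ≠ 0) ∨
    (2 ≤ t ∧ PowerSeries.coeff (R := ZMod 3) (t - 2) u ≠ 0)

/-!
Writing `a_t` for the coefficients of `u`, segment `t` of the code word is
`(a_t + a_{t-2}, a_t + a_{t-1} + a_{t-2})`, so the weight of segments `0, …, 5` only depends on
`a_0, …, a_5`. The states `σ_1, …, σ_6` are nonzero exactly when `a_0 ≠ 0` and no two
consecutive `a_t` vanish, and an exhaustive search over the `3^6` prefixes shows that such a
prefix has weight at least `5 = d_free`; hence `j ≤ 5`. The input `1 - z² + z⁴`, with outputs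
`1 + z⁶` and `1 + z - z³ + z⁵ + z⁶`, keeps the state nonzero up to `t = 5` at weight `4`.
-/

section TruncWeight

variable {F : Type*} [Field F] (v : Fin 2 → PowerSeries F)

theorem truncWeight_eq_sum_hammingNorm [DecidableEq F] (j : ℕ) :
    truncWeight v j =
      ((∑ t ∈ Finset.range j, hammingNorm fun i => coeff t (v i) : ℕ) : ℕ∞) := by
  have hset : {p : Fin 2 × ℕ | p.2 < j ∧ coeff p.2 (v p.1) ≠ 0} =
      ↑{p ∈ (Finset.univ : Finset (Fin 2)) ×ˢ Finset.range j | coeff p.2 (v p.1) ≠ 0} := by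
    ext
    simp
  rw [truncWeight, hset, Set.encard_coe_eq_coe_finsetCard, Finset.card_filter,
    Finset.sum_product_right]
  simp only [hammingNorm, Finset.card_filter]

theorem truncWeight_mono : Monotone (truncWeight v) :=
  fun _ _ hjk => Set.encard_mono fun _ hp => ⟨hp.1.trans_le hjk, hp.2⟩

end TruncWeight

section Encoder

variable {R : Type*} [Semiring R] (u : PowerSeries R) (t : ℕ)

theorem coeff_mul_one_add_X_sq :
    coeff t (u * (1 + X ^ 2)) = coeff t u + if 2 ≤ t then coeff (t - 2) u else 0 := by
  rw [mul_add, mul_one, map_add, coeff_mul_X_pow']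

theorem coeff_mul_one_add_X_add_X_sq :
    coeff t (u * (1 + X + X ^ 2)) = coeff t u + (if 1 ≤ t then coeff (t - 1) u else 0) +
      if 2 ≤ t then coeff (t - 2) u else 0 := by
  rw [mul_add, mul_add, mul_one, map_add, map_add, coeff_mul_X_pow', ← pow_one (X : R⟦X⟧),
    coeff_mul_X_pow']

theorem coeff_encode :
    (fun i => coeff t (![u * (1 + X ^ 2), u * (1 + X + X ^ 2)] i)) =
      ![coeff t u + if 2 ≤ t then coeff (t - 2) u else 0,
        coeff t u + (if 1 ≤ t then coeff (t - 1) u else 0) +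
          if 2 ≤ t then coeff (t - 2) u else 0] := by
  ext i
  fin_cases i
  · exact coeff_mul_one_add_X_sq u t
  · exact coeff_mul_one_add_X_add_X_sq u t

end Encoder

theorem stateNonzero_one (u : PowerSeries (ZMod 3)) : stateNonzero u 1 ↔ coeff 0 u ≠ 0 := by
  simp [stateNonzero]

theorem stateNonzero_add_two (u : PowerSeries (ZMod 3)) (t : ℕ) :
    stateNonzero u (t + 2) ↔ coeff (t + 1) u ≠ 0 ∨ coeff t u ≠ 0 := by
  simp [stateNonzero]

set_option synthInstance.maxSize 1024 in
theorem five_le_sum_hammingNorm_segments : ∀ a₀ a₁ a₂ a₃ a₄ a₅ : ZMod 3, a₀ ≠ 0 →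
    (a₂ ≠ 0 ∨ a₁ ≠ 0) → (a₃ ≠ 0 ∨ a₂ ≠ 0) → (a₄ ≠ 0 ∨ a₃ ≠ 0) → (a₅ ≠ 0 ∨ a₄ ≠ 0) →
    5 ≤ hammingNorm ![a₀, a₀] + hammingNorm ![a₁, a₁ + a₀] +
      hammingNorm ![a₂ + a₀, a₂ + a₁ + a₀] + hammingNorm ![a₃ + a₁, a₃ + a₂ + a₁] +
      hammingNorm ![a₄ + a₂, a₄ + a₃ + a₂] + hammingNorm ![a₅ + a₃, a₅ + a₄ + a₃] := by
  decide

theorem five_le_truncWeight_six (u : PowerSeries (ZMod 3))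
    (hu : ∀ t, 1 ≤ t → t ≤ 6 → stateNonzero u t) :
    5 ≤ truncWeight ![u * (1 + X ^ 2), u * (1 + X + X ^ 2)] 6 := by
  rw [truncWeight_eq_sum_hammingNorm]
  simp only [coeff_encode, Finset.sum_range_succ, Finset.sum_range_zero, zero_add,
    Nat.reduceLeDiff, if_true, if_false, Nat.reduceSub, add_zero]
  exact_mod_cast five_le_sum_hammingNorm_segments
    (coeff 0 u) (coeff 1 u) (coeff 2 u) (coeff 3 u) (coeff 4 u) (coeff 5 u)
    ((stateNonzero_one u).1 (hu 1 le_rfl (by norm_num)))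
    ((stateNonzero_add_two u 1).1 (hu 3 (by norm_num) (by norm_num)))
    ((stateNonzero_add_two u 2).1 (hu 4 (by norm_num) (by norm_num)))
    ((stateNonzero_add_two u 3).1 (hu 5 (by norm_num) (by norm_num)))
    ((stateNonzero_add_two u 4).1 (hu 6 (by norm_num) (by norm_num)))

theorem truncWeight_encode_one_sub_X_sq_add_X_pow_four :
    truncWeight ![(1 - X ^ 2 + X ^ 4 : PowerSeries (ZMod 3)) * (1 + X ^ 2),
      (1 - X ^ 2 + X ^ 4) * (1 + X + X ^ 2)] 5 = 4 := by
  rw [truncWeight_eq_sum_hammingNorm]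
  simp only [coeff_encode, Finset.sum_range_succ, Finset.sum_range_zero]
  simp [coeff_one, coeff_X_pow]
  decide

theorem stateNonzero_one_sub_X_sq_add_X_pow_four {t : ℕ} (h₁ : 1 ≤ t) (h₅ : t ≤ 5) :
    stateNonzero (1 - X ^ 2 + X ^ 4) t := by
  interval_cases t <;> simp [stateNonzero, coeff_one, coeff_X_pow]

/-- for the rate-1/2 code over `𝔽₃` generated by
`G(z) = [1 + z², 1 + z + z²]` (which has `d_free = 5`, `ν_1 = 2`, `δ = 2`), one has
`T_{dfree}(C) = 6`; that is: (a) every pair `(u, j)` determining an element of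
`S_{dfree}` satisfies `j ≤ 5`, and (b) some `u` yields an element of `S_{dfree}` with
`j = 5`. -/
theorem Tdfree_eq_six :
    (∀ (u : PowerSeries (ZMod 3)) (j : ℕ), 0 < j →
      truncWeight ![u * (1 + X ^ 2), u * (1 + X + X ^ 2)] j < 5 →
      (∀ t : ℕ, 1 ≤ t → t ≤ j → stateNonzero u t) →
      j ≤ 5) ∧
    (∃ u : PowerSeries (ZMod 3),
      truncWeight ![u * (1 + X ^ 2), u * (1 + X + X ^ 2)] 5 < 5 ∧
      ∀ t : ℕ, 1 ≤ t → t ≤ 5 → stateNonzero u t) := by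
  refine ⟨fun u j _ hw hu => ?_, 1 - X ^ 2 + X ^ 4, ?_,
    fun _ => stateNonzero_one_sub_X_sq_add_X_pow_four⟩
  · by_contra! hj
    have h6 : truncWeight ![u * (1 + X ^ 2), u * (1 + X + X ^ 2)] 6 < 5 :=
      (truncWeight_mono _ hj).trans_lt hw
    exact h6.not_ge (five_le_truncWeight_six u fun t ht₁ ht₆ => hu t ht₁ (ht₆.trans hj))
  · rw [truncWeight_encode_one_sub_X_sq_add_X_pow_four]
    decide
end
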